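/- arXiv:1811.11338 — 2 statements merged into one kernel-verified Lean document; each statement's English description precedes it below -/
import Mathlib

section
/- If f : ℝ → ℂ is 2π-periodic, (k−1)-times absolutely continuously differentiable, and f^(k) is of bounded variation on [0, 2π], then the Fourier coefficients d_n of f satisfy d_n = O(1/|n|^{k+1}) as |n| → ∞. -/
open Real Complex MeasureTheory intervalIntegral

/-!
Write `δ = π / |n|`. Shifting by `δ` flips the sign of `e^{-inx}`, so
`4 ∫ h e^{-inx} = ∫ (2 h(x) - h(x + δ) - h(x - δ)) e^{-inx}` for every `2π`-periodic `h`.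
When `h = f^{(k-1)}` is an indefinite integral of `g = f^{(k)}`, the second difference of `h` is
the difference of the integrals of `g` over the windows `[x, x + δ]` and `[x - δ, x]`. It is
dominated by the same expression for a monotone function `v` bounding the increments of `g` (the
variation function), and integrating that over a period telescopes to at most `δ² Var g`. This gives
the bound `O(1/n²)` for the Fourier coefficients of `f^{(k-1)}`, and `k - 1` integrations by parts
give the remaining factor `1/n^{k-1}`.
-/

open Set

def IncrementsDominatedOn {E : Type*} [NormedAddCommGroup E] (g : ℝ → E) (v : ℝ → ℝ)
    (s : Set ℝ) : Prop :=
  ∀ x ∈ s, ∀ y ∈ s, x ≤ y → ‖g y - g x‖ ≤ v y - v x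

section IncrementsDominatedOn

variable {E : Type*} [NormedAddCommGroup E] {g : ℝ → E} {v : ℝ → ℝ} {s : Set ℝ}

theorem IncrementsDominatedOn.monotoneOn (h : IncrementsDominatedOn g v s) : MonotoneOn v s :=
  fun x hx y hy hxy => sub_nonneg.1 ((norm_nonneg _).trans (h x hx y hy hxy))

theorem IncrementsDominatedOn.mono {t : Set ℝ} (h : IncrementsDominatedOn g v s) (hts : t ⊆ s) :
    IncrementsDominatedOn g v t :=
  fun x hx y hy => h x (hts hx) y (hts hy)

theorem LocallyBoundedVariationOn.incrementsDominatedOn {a : ℝ}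
    (hg : LocallyBoundedVariationOn g s) (ha : a ∈ s) :
    IncrementsDominatedOn g (variationOnFromTo g s a) s := fun x hx y hy hxy => by
  rw [← variationOnFromTo.add hg ha hx hy, add_sub_cancel_left, ← dist_eq_norm, dist_comm,
    variationOnFromTo.eq_of_le g s hxy, dist_edist]
  exact ENNReal.toReal_mono (hg x y hx hy)
    (eVariationOn.edist_le g ⟨hx, le_rfl, hxy⟩ ⟨hy, hxy, le_rfl⟩)

end IncrementsDominatedOn

theorem Function.Periodic.boundedVariationOn_Icc_neg {E : Type*} [PseudoEMetricSpace E]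
    {g : ℝ → E} {T : ℝ} (hp : Function.Periodic g T) (hT : 0 ≤ T)
    (hbv : BoundedVariationOn g (Icc 0 T)) : BoundedVariationOn g (Icc (-T) T) := by
  have hshift : eVariationOn g (Icc 0 T) = eVariationOn g (Icc (-T) 0) := by
    have := eVariationOn.comp_eq_of_monotoneOn g (· - T) (t := Icc 0 T)
      fun x _ y _ hxy => by simp only; linarith
    rwa [show g ∘ (· - T) = g from funext hp.sub_eq, image_sub_const_Icc, zero_sub, sub_self]
      at this
  have hsplit := eVariationOn.Icc_add_Icc g (neg_nonpos.2 hT) hT (mem_univ 0)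
  simp only [univ_inter] at hsplit
  rw [BoundedVariationOn, ← hsplit, ← hshift]
  exact ENNReal.add_ne_top.2 ⟨hbv, hbv⟩

theorem Function.Periodic.deriv {𝕜 F : Type*} [NontriviallyNormedField 𝕜] [NormedAddCommGroup F]
    [NormedSpace 𝕜 F] {f : 𝕜 → F} {c : 𝕜} (hf : Function.Periodic f c) :
    Function.Periodic (deriv f) c := fun x => by
  rw [← deriv_comp_add_const, funext hf]

theorem Function.Periodic.iteratedDeriv {𝕜 F : Type*} [NontriviallyNormedField 𝕜]
    [NormedAddCommGroup F] [NormedSpace 𝕜 F] {f : 𝕜 → F} {c : 𝕜} (hf : Function.Periodic f c)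
    (m : ℕ) : Function.Periodic (iteratedDeriv m f) c := by
  induction m with
  | zero => simpa
  | succ m ih => simpa [iteratedDeriv_succ] using ih.deriv

noncomputable def movingIntegral {E : Type*} [NormedAddCommGroup E] [NormedSpace ℝ E]
    (δ : ℝ) (φ : ℝ → E) (x : ℝ) : E :=
  ∫ t in x..x + δ, φ t

section MovingIntegral

variable {E : Type*} [NormedAddCommGroup E] {φ : ℝ → E} {a b δ : ℝ}

theorem IntervalIntegrable.mono_Icc {c d : ℝ} (hφ : IntervalIntegrable φ volume a b)
    (hc : c ∈ Icc a b) (hd : d ∈ Icc a b) : IntervalIntegrable φ volume c d :=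
  hφ.mono_set (uIcc_subset_uIcc (Icc_subset_uIcc hc) (Icc_subset_uIcc hd))

theorem IntervalIntegrable.comp_add_sub (hφ : IntervalIntegrable φ volume a (b + δ))
    (hab : a ≤ b) (hδ : 0 ≤ δ) :
    IntervalIntegrable (fun x => φ (x + δ) - φ x) volume a b := by
  have hshift := (hφ.mono_Icc (c := a + δ) ⟨by linarith, by linarith⟩ ⟨by linarith, le_rfl⟩)
    |>.comp_add_right δ
  simp only [add_sub_cancel_right] at hshift
  exact hshift.sub (hφ.mono_Icc ⟨le_rfl, by linarith⟩ ⟨hab, by linarith⟩)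

variable [NormedSpace ℝ E]

theorem integral_comp_add_sub_eq_movingIntegral_sub (hab : a ≤ b) (hδ : 0 ≤ δ)
    (hφ : IntervalIntegrable φ volume a (b + δ)) :
    ∫ x in a..b, (φ (x + δ) - φ x) = movingIntegral δ φ b - movingIntegral δ φ a := by
  have hab' : IntervalIntegrable φ volume a b := hφ.mono_Icc ⟨le_rfl, by linarith⟩ ⟨hab, by linarith⟩
  have hshifted : IntervalIntegrable φ volume (a + δ) (b + δ) :=
    hφ.mono_Icc ⟨by linarith, by linarith⟩ ⟨by linarith, le_rfl⟩
  rw [integral_sub (by simpa using hshifted.comp_add_right δ) hab', integral_comp_add_right,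
    integral_interval_sub_interval_comm hshifted hab'
      (hφ.mono_Icc ⟨by linarith, by linarith⟩ ⟨le_rfl, by linarith⟩),
    movingIntegral, movingIntegral, integral_symm a, integral_symm b]
  abel

theorem norm_movingIntegral_sub_le {v : ℝ → ℝ} (hφv : IncrementsDominatedOn φ v (Icc a (b + δ)))
    (hφ : IntervalIntegrable φ volume a (b + δ)) (hab : a ≤ b) (hδ : 0 ≤ δ) :
    ‖movingIntegral δ φ b - movingIntegral δ φ a‖ ≤
      movingIntegral δ v b - movingIntegral δ v a := by
  have hv : IntervalIntegrable v volume a (b + δ) :=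
    (hφv.monotoneOn.mono (uIcc_subset_Icc ⟨le_rfl, by linarith⟩ ⟨by linarith, le_rfl⟩))
      |>.intervalIntegrable
  rw [← integral_comp_add_sub_eq_movingIntegral_sub hab hδ hφ,
    ← integral_comp_add_sub_eq_movingIntegral_sub hab hδ hv]
  refine (intervalIntegral.norm_integral_le_integral_norm hab).trans
    (integral_mono_on hab (hφ.comp_add_sub hab hδ).norm (hv.comp_add_sub hab hδ) ?_)
  exact fun x hx => hφv x ⟨hx.1, by linarith [hx.2]⟩ (x + δ)
    ⟨by linarith [hx.1], by linarith [hx.2]⟩ (by linarith)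

variable {v : ℝ → ℝ}

theorem MonotoneOn.movingIntegral_sub_le (hv : MonotoneOn v (Icc a (b + δ))) (hab : a ≤ b)
    (hδ : 0 ≤ δ) : movingIntegral δ v b - movingIntegral δ v a ≤ δ * (v (b + δ) - v a) := by
  have hint : ∀ c ∈ Icc a (b + δ), ∀ d ∈ Icc a (b + δ), IntervalIntegrable v volume c d :=
    fun c hc d hd => (hv.mono (uIcc_subset_Icc hc hd)).intervalIntegrable
  have hupper : movingIntegral δ v b ≤ δ * v (b + δ) := by
    have := integral_mono_on (by linarith)
      (hint b ⟨hab, by linarith⟩ (b + δ) ⟨by linarith, le_rfl⟩) intervalIntegrable_const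
      fun x hx => hv ⟨by linarith [hx.1], hx.2⟩ ⟨by linarith, le_rfl⟩ hx.2
    simpa [movingIntegral] using this
  have hlower : δ * v a ≤ movingIntegral δ v a := by
    have := integral_mono_on (by linarith) intervalIntegrable_const
      (hint a ⟨le_rfl, by linarith⟩ (a + δ) ⟨by linarith, by linarith⟩)
      fun x hx => hv ⟨le_rfl, by linarith⟩ ⟨hx.1, by linarith [hx.2]⟩ hx.1
    simpa [movingIntegral] using this
  linarith

theorem MonotoneOn.integral_comp_add_sub_le (hv : MonotoneOn v (Icc a (b + δ))) (hab : a ≤ b)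
    (hδ : 0 ≤ δ) : ∫ x in a..b, (v (x + δ) - v x) ≤ δ * (v (b + δ) - v a) := by
  rw [integral_comp_add_sub_eq_movingIntegral_sub hab hδ
    (hv.mono (uIcc_subset_Icc ⟨le_rfl, by linarith⟩ ⟨by linarith, le_rfl⟩)).intervalIntegrable]
  exact hv.movingIntegral_sub_le hab hδ

theorem MonotoneOn.movingIntegral (hv : MonotoneOn v (Icc a (b + δ))) (hδ : 0 ≤ δ) :
    MonotoneOn (movingIntegral δ v) (Icc a b) := by
  intro x hx y hy hxy
  have hv' : MonotoneOn v (Icc x (y + δ)) := hv.mono (Icc_subset_Icc hx.1 (by linarith [hy.2]))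
  rw [← sub_nonneg, ← integral_comp_add_sub_eq_movingIntegral_sub hxy hδ
    (hv'.mono (uIcc_subset_Icc ⟨le_rfl, by linarith⟩ ⟨by linarith, le_rfl⟩)).intervalIntegrable]
  exact integral_nonneg hxy fun t ht => sub_nonneg.2
    (hv' ⟨ht.1, by linarith [ht.2]⟩ ⟨by linarith [ht.1], by linarith [ht.2]⟩ (by linarith))

end MovingIntegral

section SecondDifference

variable {h g : ℝ → ℂ} {v : ℝ → ℝ} {a b δ : ℝ}

theorem norm_two_mul_sub_sub_le (hg : LocallyIntegrable g)
    (hhg : ∀ x, h x = h 0 + ∫ t in 0..x, g t) {x : ℝ}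
    (hgv : IncrementsDominatedOn g v (Icc (x - δ) (x + δ))) (hδ : 0 ≤ δ) :
    ‖2 * h x - h (x + δ) - h (x - δ)‖ ≤ movingIntegral δ v x - movingIntegral δ v (x - δ) := by
  have hgint : ∀ c d, IntervalIntegrable g volume c d := fun c d =>
    (hg.integrableOn_isCompact isCompact_uIcc).intervalIntegrable
  have hstep : ∀ y, h (y + δ) - h y = movingIntegral δ g y := fun y => by
    rw [hhg (y + δ), hhg y, add_sub_add_left_eq_sub,
      integral_interval_sub_left (hgint _ _) (hgint _ _), movingIntegral]
  have hsecond : 2 * h x - h (x + δ) - h (x - δ) =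
      movingIntegral δ g (x - δ) - movingIntegral δ g x := by
    rw [← hstep, ← hstep, sub_add_cancel]; ring
  rw [hsecond, norm_sub_rev]
  exact norm_movingIntegral_sub_le hgv (hgint _ _) (by linarith) hδ

theorem integral_norm_two_mul_sub_sub_le (hc : Continuous h) (hg : LocallyIntegrable g)
    (hhg : ∀ x, h x = h 0 + ∫ t in 0..x, g t)
    (hgv : IncrementsDominatedOn g v (Icc (a - δ) (b + δ))) (hab : a ≤ b) (hδ : 0 ≤ δ) :
    ∫ x in a..b, ‖2 * h x - h (x + δ) - h (x - δ)‖ ≤ δ ^ 2 * (v (b + δ) - v (a - δ)) := by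
  set ψ := movingIntegral δ v
  have hψ : MonotoneOn ψ (Icc (a - δ) b) := hgv.monotoneOn.movingIntegral hδ
  have hψint : IntervalIntegrable ψ volume (a - δ) b :=
    (hψ.mono (uIcc_subset_Icc ⟨le_rfl, by linarith⟩ ⟨by linarith, le_rfl⟩)).intervalIntegrable
  have hψshift : IntervalIntegrable (fun x => ψ (x - δ)) volume a b := by
    simpa using (hψint.mono_Icc (c := a - δ) (d := b - δ) ⟨le_rfl, by linarith⟩
      ⟨by linarith, by linarith⟩).comp_sub_right δ
  calc ∫ x in a..b, ‖2 * h x - h (x + δ) - h (x - δ)‖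
      ≤ ∫ x in a..b, (ψ x - ψ (x - δ)) :=
        integral_mono_on hab
          ((by fun_prop : Continuous fun x => ‖2 * h x - h (x + δ) - h (x - δ)‖)
            |>.intervalIntegrable _ _)
          ((hψint.mono_Icc ⟨by linarith, by linarith⟩ ⟨by linarith, le_rfl⟩).sub hψshift)
          fun x hx => norm_two_mul_sub_sub_le hg hhg
            (hgv.mono (Icc_subset_Icc (by linarith [hx.1]) (by linarith [hx.2]))) hδ
    _ = ∫ x in (a - δ)..(b - δ), (ψ (x + δ) - ψ x) := by
        rw [← integral_comp_sub_right]; simp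
    _ ≤ δ * (ψ b - ψ (a - δ)) := by
        simpa using MonotoneOn.integral_comp_add_sub_le (a := a - δ) (b := b - δ)
          (by rwa [sub_add_cancel]) (by linarith) hδ
    _ ≤ δ * (δ * (v (b + δ) - v (a - δ))) :=
        mul_le_mul_of_nonneg_left (hgv.monotoneOn.movingIntegral_sub_le (by linarith) hδ) hδ
    _ = δ ^ 2 * (v (b + δ) - v (a - δ)) := by ring

end SecondDifference

noncomputable def fourierMode (n : ℤ) (x : ℝ) : ℂ := exp (-I * n * x)

section FourierMode

variable {n : ℤ}

@[fun_prop]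
theorem continuous_fourierMode (n : ℤ) : Continuous (fourierMode n) := by
  unfold fourierMode; fun_prop

theorem norm_fourierMode (n : ℤ) (x : ℝ) : ‖fourierMode n x‖ = 1 := by
  rw [fourierMode, show -I * n * x = ((-(n * x) : ℝ) : ℂ) * I by push_cast; ring]
  exact norm_exp_ofReal_mul_I _

theorem fourierMode_periodic (n : ℤ) : Function.Periodic (fourierMode n) (2 * π) := fun x => by
  rw [fourierMode, fourierMode, show -I * n * ((x + 2 * π : ℝ) : ℂ)
      = -I * n * x + (-n : ℤ) * (2 * π * I) by push_cast; ring,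
    Complex.exp_add, exp_int_mul_two_pi_mul_I, mul_one]

theorem fourierMode_add_pi_div_abs (hn : n ≠ 0) (x : ℝ) :
    fourierMode n (x + π / |(n : ℝ)|) = -fourierMode n x := by
  have hn' : (n : ℂ) ≠ 0 := by exact_mod_cast hn
  unfold fourierMode
  rcases abs_choice (n : ℝ) with h | h <;> rw [h]
  · rw [show -I * n * ((x + π / n : ℝ) : ℂ) = -I * n * x + -(π * I) by
        push_cast; field_simp; ring,
      Complex.exp_add, Complex.exp_neg, exp_pi_mul_I]
    simp
  · rw [show -I * n * ((x + π / -n : ℝ) : ℂ) = -I * n * x + π * I by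
        push_cast; field_simp; ring,
      Complex.exp_add, exp_pi_mul_I]
    simp

theorem integral_comp_add_mul_fourierMode {φ : ℝ → ℂ} (hφ : Function.Periodic φ (2 * π))
    {c : ℝ} (hc : ∀ x, fourierMode n (x + c) = -fourierMode n x) :
    ∫ x in -π..π, φ (x + c) * fourierMode n x = -∫ x in -π..π, φ x * fourierMode n x := by
  have hperiodic : Function.Periodic (fun x => φ x * fourierMode n x) (2 * π) := fun x => by
    simp only [hφ x, fourierMode_periodic n x]
  have hshift := hperiodic.intervalIntegral_add_eq (-π + c) (-π)
  rw [show -π + c + 2 * π = π + c by ring, show -π + 2 * π = π by ring] at hshift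
  have hflip : ∀ x, φ (x + c) * fourierMode n x = -(φ (x + c) * fourierMode n (x + c)) := by
    intro x; rw [hc]; ring
  rw [integral_congr fun x _ => hflip x, intervalIntegral.integral_neg,
    integral_comp_add_right (fun x => φ x * fourierMode n x), hshift]

theorem four_mul_norm_integral_mul_fourierMode_le {h : ℝ → ℂ} (hc : Continuous h)
    (hp : Function.Periodic h (2 * π)) (hn : n ≠ 0) :
    4 * ‖∫ x in -π..π, h x * fourierMode n x‖ ≤
      ∫ x in -π..π, ‖2 * h x - h (x + π / |(n : ℝ)|) - h (x - π / |(n : ℝ)|)‖ := by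
  set δ := π / |(n : ℝ)|
  have hplus := integral_comp_add_mul_fourierMode hp (fourierMode_add_pi_div_abs hn)
  have hminus := integral_comp_add_mul_fourierMode hp (c := -δ) fun x => by
    have := fourierMode_add_pi_div_abs hn (x + -δ)
    rw [neg_add_cancel_right] at this
    rw [this, neg_neg]
  simp only [← sub_eq_add_neg] at hminus
  have hint : ∀ c, IntervalIntegrable (fun x => h (x + c) * fourierMode n x) volume (-π) π :=
    fun c => (by fun_prop : Continuous fun x => h (x + c) * fourierMode n x).intervalIntegrable _ _
  have h0 : IntervalIntegrable (fun x => h x * fourierMode n x) volume (-π) π := by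
    simpa using hint 0
  have hsecond : ∫ x in -π..π, (2 * h x - h (x + δ) - h (x - δ)) * fourierMode n x =
      4 * ∫ x in -π..π, h x * fourierMode n x := by
    simp_rw [sub_mul, mul_assoc]
    rw [integral_sub ((h0.const_mul 2).sub (hint δ)) (by simpa [sub_eq_add_neg] using hint (-δ)),
      integral_sub (h0.const_mul 2) (hint δ), intervalIntegral.integral_const_mul, hplus, hminus]
    ring
  calc 4 * ‖∫ x in -π..π, h x * fourierMode n x‖
      = ‖∫ x in -π..π, (2 * h x - h (x + δ) - h (x - δ)) * fourierMode n x‖ := by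
        rw [hsecond, norm_mul, RCLike.norm_ofNat]
    _ ≤ ∫ x in -π..π, ‖(2 * h x - h (x + δ) - h (x - δ)) * fourierMode n x‖ :=
        intervalIntegral.norm_integral_le_integral_norm (by linarith [pi_pos])
    _ = ∫ x in -π..π, ‖2 * h x - h (x + δ) - h (x - δ)‖ := by
        simp only [norm_mul, norm_fourierMode, mul_one]

theorem norm_integral_mul_fourierMode_le {h g : ℝ → ℂ} {v : ℝ → ℝ} (hc : Continuous h)
    (hp : Function.Periodic h (2 * π)) (hg : LocallyIntegrable g)
    (hhg : ∀ x, h x = h 0 + ∫ t in 0..x, g t)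
    (hgv : IncrementsDominatedOn g v (Icc (-(2 * π)) (2 * π))) (hn : n ≠ 0) :
    ‖∫ x in -π..π, h x * fourierMode n x‖ ≤
      (π / |(n : ℝ)|) ^ 2 * (v (2 * π) - v (-(2 * π))) / 4 := by
  set δ := π / |(n : ℝ)|
  have hδ : 0 ≤ δ := by positivity
  have hδπ : δ ≤ π := div_le_self pi_pos.le (by exact_mod_cast Int.one_le_abs hn)
  have hsub : Icc (-π - δ) (π + δ) ⊆ Icc (-(2 * π)) (2 * π) :=
    Icc_subset_Icc (by linarith) (by linarith)
  have hv : v (π + δ) - v (-π - δ) ≤ v (2 * π) - v (-(2 * π)) := by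
    have hπ := pi_pos
    have hright := hgv.monotoneOn (hsub ⟨by linarith, le_rfl⟩) (right_mem_Icc.2 (by linarith))
      (by linarith)
    have hleft := hgv.monotoneOn (left_mem_Icc.2 (by linarith)) (hsub ⟨le_rfl, by linarith⟩)
      (by linarith)
    linarith
  have := (four_mul_norm_integral_mul_fourierMode_le hc hp hn).trans
    (integral_norm_two_mul_sub_sub_le hc hg hhg (hgv.mono hsub) (by linarith [pi_pos]) hδ)
  linarith [mul_le_mul_of_nonneg_left hv (sq_nonneg δ)]

theorem fourierCoeffOn_neg_pi_pi (φ : ℝ → ℂ) (n : ℤ) :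
    fourierCoeffOn (neg_lt_self pi_pos) φ n =
      (2 * (π : ℂ))⁻¹ * ∫ x in -π..π, φ x * fourierMode n x := by
  rw [fourierCoeffOn_eq_integral, show π - -π = 2 * π by ring, Complex.real_smul]
  push_cast
  rw [one_div]
  congr 2
  funext x
  rw [fourier_coe_apply, fourierMode, smul_eq_mul, mul_comm]
  congr 2
  push_cast
  field_simp

theorem integral_mul_fourierMode_eq_integral_deriv {φ : ℝ → ℂ}
    (hp : Function.Periodic φ (2 * π)) (hd : Differentiable ℝ φ) (hd' : Continuous (deriv φ))
    (hn : n ≠ 0) :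
    ∫ x in -π..π, φ x * fourierMode n x =
      (I * n)⁻¹ * ∫ x in -π..π, deriv φ x * fourierMode n x := by
  have h := fourierCoeffOn_of_hasDerivAt (neg_lt_self pi_pos) hn (fun x _ => (hd x).hasDerivAt)
    (hd'.intervalIntegrable _ _)
  rw [show φ π = φ (-π) by simpa [two_mul] using hp (-π), sub_self, mul_zero, zero_sub,
    fourierCoeffOn_neg_pi_pi, fourierCoeffOn_neg_pi_pi] at h
  have hn' : (n : ℂ) ≠ 0 := by exact_mod_cast hn
  have hπ : (π : ℂ) ≠ 0 := by exact_mod_cast pi_ne_zero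
  push_cast at h
  field_simp at h ⊢
  linear_combination h / 2

theorem integral_mul_fourierMode_eq_iteratedDeriv {m : ℕ} {φ : ℝ → ℂ}
    (hφ : ContDiff ℝ m φ) (hp : Function.Periodic φ (2 * π)) (hn : n ≠ 0) :
    ∫ x in -π..π, φ x * fourierMode n x =
      (I * n)⁻¹ ^ m * ∫ x in -π..π, iteratedDeriv m φ x * fourierMode n x := by
  induction m generalizing φ with
  | zero => simp
  | succ m ih =>
    obtain ⟨hd, -, hφ'⟩ := (contDiff_succ_iff_deriv (n := m)).1 (by exact_mod_cast hφ)
    rw [integral_mul_fourierMode_eq_integral_deriv hp hd hφ'.continuous hn, ih hφ' hp.deriv,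
      iteratedDeriv_succ', pow_succ', mul_assoc]

end FourierMode

theorem fourier_coeff_decay_of_smooth_bv_general (k : ℕ) (f : ℝ → ℂ)
    (hper : Function.Periodic f (2 * π))
    (hsmooth : ContDiff ℝ (k - 1 : ℕ) f)
    (hint : LocallyIntegrable (iteratedDeriv k f))
    (hAC : ∀ x : ℝ, iteratedDeriv (k - 1) f x =
      iteratedDeriv (k - 1) f 0 + ∫ t in (0:ℝ)..x, iteratedDeriv k f t)
    (hBV : BoundedVariationOn (iteratedDeriv k f) (Set.Icc 0 (2 * π))) :
    ∃ C : ℝ, ∀ n : ℤ, n ≠ 0 →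
      ‖(1 / Real.sqrt (2 * π) : ℂ) *
          ∫ x in (-π:ℝ)..π, f x * Complex.exp (-Complex.I * n * x)‖
        ≤ C / |(n : ℝ)| ^ (k + 1) := by
  have hs : -(2 * π) ∈ Icc (-(2 * π)) (2 * π) := left_mem_Icc.2 (by linarith [pi_pos])
  set v := variationOnFromTo (iteratedDeriv k f) (Icc (-(2 * π)) (2 * π)) (-(2 * π))
  have hgv : IncrementsDominatedOn (iteratedDeriv k f) v (Icc (-(2 * π)) (2 * π)) :=
    ((hper.iteratedDeriv k).boundedVariationOn_Icc_neg two_pi_pos.le hBV)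
      |>.locallyBoundedVariationOn.incrementsDominatedOn hs
  have hV : 0 ≤ v (2 * π) - v (-(2 * π)) :=
    sub_nonneg.2 (hgv.monotoneOn hs (right_mem_Icc.2 (by linarith [pi_pos])) (by linarith [pi_pos]))
  set C := (Real.sqrt (2 * π))⁻¹ * (π ^ 2 * (v (2 * π) - v (-(2 * π))) / 4)
  refine ⟨C, fun n hn => ?_⟩
  have hN : 1 ≤ |(n : ℝ)| := by exact_mod_cast Int.one_le_abs hn
  have hkey := norm_integral_mul_fourierMode_le (hsmooth.continuous_iteratedDeriv _ le_rfl)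
    (hper.iteratedDeriv _) hint hAC hgv hn
  calc ‖(1 / Real.sqrt (2 * π) : ℂ) * ∫ x in (-π:ℝ)..π, f x * fourierMode n x‖
      = (Real.sqrt (2 * π))⁻¹ * ((1 / |(n : ℝ)|) ^ (k - 1) *
          ‖∫ x in -π..π, iteratedDeriv (k - 1) f x * fourierMode n x‖) := by
        rw [integral_mul_fourierMode_eq_iteratedDeriv hsmooth hper hn, norm_mul, norm_mul,
          norm_pow, norm_div, norm_one, Complex.norm_real, Real.norm_of_nonneg (Real.sqrt_nonneg _),
          norm_inv, norm_mul, Complex.norm_I, one_mul, Complex.norm_intCast, one_div, one_div]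
    _ ≤ (Real.sqrt (2 * π))⁻¹ * ((1 / |(n : ℝ)|) ^ (k - 1) *
          ((π / |(n : ℝ)|) ^ 2 * (v (2 * π) - v (-(2 * π))) / 4)) := by gcongr
    _ = C * (1 / |(n : ℝ)|) ^ (k - 1 + 2) := by ring
    _ ≤ C * (1 / |(n : ℝ)|) ^ (k + 1) :=
        mul_le_mul_of_nonneg_left (pow_le_pow_of_le_one (by positivity)
          ((div_le_one (by positivity)).2 hN) (by omega)) (by positivity)
    _ = C / |(n : ℝ)| ^ (k + 1) := by rw [one_div_pow, mul_one_div]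

/-- If f is 2π-periodic, (k−1)-times absolutely continuously differentiable
(expressed via the fundamental theorem of calculus: f^(k−1) is an indefinite
integral of f^(k)), and f^(k) is of bounded variation on [0, 2π], then the
Fourier coefficients d_n = (1/√(2π)) ∫_{−π}^{π} f(x) e^{−inx} dx satisfy
d_n = O(1/|n|^{k+1}) as |n| → ∞. -/
theorem fourier_coeff_decay_of_smooth_bv (k : ℕ) (hk : 1 ≤ k) (f : ℝ → ℂ)
    (hper : Function.Periodic f (2 * π))
    (hsmooth : ContDiff ℝ (k - 1 : ℕ) f)
    (hint : LocallyIntegrable (iteratedDeriv k f))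
    (hAC : ∀ x : ℝ, iteratedDeriv (k - 1) f x =
      iteratedDeriv (k - 1) f 0 + ∫ t in (0:ℝ)..x, iteratedDeriv k f t)
    (hBV : BoundedVariationOn (iteratedDeriv k f) (Set.Icc 0 (2 * π))) :
    ∃ C : ℝ, ∀ n : ℤ, n ≠ 0 →
      ‖(1 / Real.sqrt (2 * π) : ℂ) *
          ∫ x in (-π:ℝ)..π, f x * Complex.exp (-Complex.I * n * x)‖
        ≤ C / |(n : ℝ)| ^ (k + 1) :=
  fourier_coeff_decay_of_smooth_bv_general k f hper hsmooth hint hAC hBV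
end

section
/- Let α be a real number that is not an integer, and define B(t) = (sin²(πα)/π²) Σ_{n∈ℤ} e^{−int}/(n+α)². Then for 0 ≤ t ≤ 2π, B(t) = (1 − (1 − e^{−2πiα}) t/(2π)) e^{iαt}. -/
/-!
Extend the closed form `g` from `[0, 2π)` to a `2π`-periodic function. Since `g (2π) = g 0` the
extension is continuous, and on `[0, 2π]` its Fourier integrand is `(1 - c x) e^{i(α - n)x}` with
`c = (1 - e^{-2πiα}) / (2π)`, which integrates in closed form to the coefficients
`sin²(πα) / (π² (α - n)²)`; the identity `(1 - e^{-2πiα})(e^{2πiα} - 1) = -4 sin²(πα)`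
is what produces the sine. These coefficients are summable, so the Fourier series converges to `g`
at every point of `[0, 2π]`, and `n ↦ -n` turns it into `B`.
-/

open Real Complex

namespace AddCircle

theorem liftIco_coe_apply_of_mem_Icc {𝕜 B : Type*} [AddCommGroup 𝕜] [LinearOrder 𝕜]
    [IsOrderedAddMonoid 𝕜] [Archimedean 𝕜] {p a : 𝕜} [hp : Fact (0 < p)] {f : 𝕜 → B}
    (hf : f a = f (a + p)) {x : 𝕜} (hx : x ∈ Set.Icc a (a + p)) :
    liftIco p a f x = f x := by
  rcases hx.1.eq_or_lt with rfl | hax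
  · exact liftIco_coe_apply (Set.left_mem_Ico.2 (lt_add_of_pos_right a hp.out))
  · rw [← liftIoc_eq_liftIco hf]
    exact liftIoc_coe_apply ⟨hax, hx.2⟩

end AddCircle

theorem hasDerivAt_affine_mul_cexp (a b d : ℂ) (hd : d ≠ 0) (x : ℝ) :
    HasDerivAt (fun y : ℝ => ((a + b * y) / d - b / d ^ 2) * exp (d * y))
      ((a + b * x) * exp (d * x)) x := by
  have hy : HasDerivAt (fun y : ℝ => (y : ℂ)) 1 x := ofRealCLM.hasDerivAt
  have h1 := (((hy.const_mul b).const_add a).div_const d).sub_const (b / d ^ 2)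
  have h2 := (hy.const_mul d).cexp
  refine (h1.mul h2).congr_deriv ?_
  field_simp
  ring

theorem integral_affine_mul_cexp (a b d : ℂ) (hd : d ≠ 0) (l u : ℝ) :
    ∫ x in l..u, (a + b * x) * exp (d * x) =
      ((a + b * u) / d - b / d ^ 2) * exp (d * u) - ((a + b * l) / d - b / d ^ 2) * exp (d * l) :=
  intervalIntegral.integral_eq_sub_of_hasDerivAt
    (fun x _ => hasDerivAt_affine_mul_cexp a b d hd x)
    ((by fun_prop : Continuous fun x : ℝ => (a + b * x) * exp (d * x)).intervalIntegrable l u)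

theorem one_sub_cexp_neg_mul_cexp_sub_one (x : ℂ) :
    (1 - exp (-(2 * x) * I)) * (exp (2 * x * I) - 1) = -4 * Complex.sin x ^ 2 := by
  have h := two_sin x
  have hmul : exp (-x * I) * exp (x * I) = 1 := by rw [← Complex.exp_add]; simp
  rw [show -(2 * x) * I = (2 : ℕ) * (-x * I) by push_cast; ring,
    show 2 * x * I = (2 : ℕ) * (x * I) by push_cast; ring, Complex.exp_nat_mul,
    Complex.exp_nat_mul]
  linear_combination (2 * Complex.sin x + (exp (-x * I) - exp (x * I)) * I) * h
    + (exp (-x * I) - exp (x * I)) ^ 2 * I_sq - (exp (-x * I) * exp (x * I) - 1) * hmul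

noncomputable def blochProfile (α x : ℝ) : ℂ :=
  (1 - (1 - exp (-2 * π * I * α)) * x / (2 * π)) * exp (I * α * x)

theorem blochProfile_two_pi (α : ℝ) : blochProfile α (2 * π) = blochProfile α 0 := by
  have hπ : (2 * π : ℂ) ≠ 0 := by simp [pi_ne_zero]
  have hinv : exp (-2 * π * I * α) * exp (I * α * (2 * π)) = 1 := by
    rw [← Complex.exp_add]; ring_nf; exact Complex.exp_zero
  simp only [blochProfile, ofReal_mul, ofReal_ofNat, ofReal_zero, mul_zero, zero_div,
    Complex.exp_zero, sub_zero, mul_div_cancel_right₀ _ hπ, sub_sub_cancel, hinv, mul_one]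

local instance : Fact (0 < 2 * π) := ⟨two_pi_pos⟩

theorem fourierCoeff_liftIco_blochProfile (α : ℝ) (hα : ∀ m : ℤ, α ≠ m) (n : ℤ) :
    fourierCoeff (AddCircle.liftIco (2 * π) 0 (blochProfile α)) n =
      ((Real.sin (π * α) ^ 2 / π ^ 2 : ℝ) : ℂ) / ((α : ℂ) - n) ^ 2 := by
  have hαn : (α : ℂ) - n ≠ 0 := sub_ne_zero.2 (by exact_mod_cast hα n)
  set q := exp (-2 * π * I * α)
  set E := exp (2 * π * I * α)
  set d := I * ((α : ℂ) - n)
  have hd : d ≠ 0 := mul_ne_zero I_ne_zero hαn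
  have integrand (x : ℝ) : fourier (-n) (x : AddCircle (0 + 2 * π - 0)) • blochProfile α x =
      (1 + -(1 - q) / (2 * π) * x) * exp (d * x) := by
    rw [fourier_coe_apply, smul_eq_mul, blochProfile, mul_left_comm, ← Complex.exp_add]
    congr 2
    · ring
    · push_cast; field_simp; ring
  have hE : exp (d * (2 * π : ℝ)) = E := by
    rw [show d * (2 * π : ℝ) = 2 * π * I * α + (-n : ℤ) * (2 * π * I) by push_cast; ring,
      Complex.exp_add, exp_int_mul_two_pi_mul_I, mul_one]
  have hqE : q * E = 1 := by rw [← Complex.exp_add]; ring_nf; exact Complex.exp_zero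
  have hsin : (1 - q) * (E - 1) = -4 * Complex.sin (π * α) ^ 2 := by
    convert one_sub_cexp_neg_mul_cexp_sub_one (π * α) using 4 <;> ring
  rw [fourierCoeff_liftIco_eq, fourierCoeffOn_eq_integral,
    intervalIntegral.integral_congr fun x _ => integrand x, integral_affine_mul_cexp _ _ _ hd,
    zero_add, sub_zero, hE, ofReal_zero, mul_zero, mul_zero, Complex.exp_zero, real_smul]
  have hd2 : d ^ 2 = -((α : ℂ) - n) ^ 2 := by rw [mul_pow, I_sq]; ring
  push_cast
  field_simp
  linear_combination 2 * π * d * ((α : ℂ) - n) ^ 2 * hqE + ((α : ℂ) - n) ^ 2 * hsin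
    - 4 * Complex.sin (π * α) ^ 2 * hd2

theorem summable_one_div_sub_intCast_sq (α : ℝ) :
    Summable fun n : ℤ => 1 / ((α : ℂ) - n) ^ 2 := by
  refine .of_norm (((Real.summable_one_div_int_add_rpow (-α) 2).2 one_lt_two).congr fun n => ?_)
  rw [norm_div, norm_one, norm_pow, ← ofReal_intCast, ← ofReal_sub, norm_real, Real.norm_eq_abs,
    Real.rpow_two, ← sub_eq_add_neg, abs_sub_comm]

theorem hasSum_fourier_blochProfile (α : ℝ) (hα : ∀ m : ℤ, α ≠ m) {t : ℝ}
    (ht : t ∈ Set.Icc 0 (2 * π)) :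
    HasSum (fun n : ℤ => ((Real.sin (π * α) ^ 2 / π ^ 2 : ℝ) : ℂ) / ((α : ℂ) - n) ^ 2 *
      exp (I * n * t)) (blochProfile α t) := by
  have hper : blochProfile α 0 = blochProfile α (0 + 2 * π) := by
    rw [zero_add, blochProfile_two_pi]
  let F : C(AddCircle (2 * π), ℂ) :=
    ⟨_, AddCircle.liftIco_continuous hper (by unfold blochProfile; fun_prop)⟩
  have hF : Summable (fourierCoeff F) := by
    refine ((summable_one_div_sub_intCast_sq α).mul_left
      ((Real.sin (π * α) ^ 2 / π ^ 2 : ℝ) : ℂ)).congr fun n => ?_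
    rw [mul_one_div]
    exact (fourierCoeff_liftIco_blochProfile α hα n).symm
  convert has_pointwise_sum_fourier_series_of_summable hF t using 1
  · ext n
    simp only [F, ContinuousMap.coe_mk, fourierCoeff_liftIco_blochProfile α hα, fourier_coe_apply,
      smul_eq_mul]
    congr 2
    push_cast
    field_simp
  · exact (AddCircle.liftIco_coe_apply_of_mem_Icc hper (by rwa [zero_add])).symm

/-- For non-integer α, the 2π-periodic function
B(t) = (sin²(πα)/π²) Σ_{n∈ℤ} e^{−int}/(n+α)² has the closed form
B(t) = (1 − (1 − e^{−2πiα}) t/(2π)) e^{iαt} for 0 ≤ t ≤ 2π. -/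
theorem bloch_autocorrelation_closed_form (α : ℝ) (hα : ∀ m : ℤ, α ≠ m)
    (t : ℝ) (ht0 : 0 ≤ t) (ht : t ≤ 2 * π) :
    ((Real.sin (π * α) ^ 2 / π ^ 2 : ℝ) : ℂ) *
        ∑' n : ℤ, Complex.exp (-Complex.I * n * t) / ((n : ℂ) + α) ^ 2
      = (1 - (1 - Complex.exp (-2 * π * Complex.I * α)) * t / (2 * π)) *
          Complex.exp (Complex.I * α * t) := by
  rw [← tsum_mul_left]
  refine .trans (tsum_congr fun n => ?_)
    ((Equiv.neg ℤ).hasSum_iff.2 (hasSum_fourier_blochProfile α hα ⟨ht0, ht⟩)).tsum_eq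
  simp only [Function.comp_apply, Equiv.neg_apply, Int.cast_neg, mul_neg, neg_mul,
    sub_neg_eq_add, add_comm (α : ℂ)]
  ring
end
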